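/- If a vPDA process pX does not provide unbounded popping, then pX is bisimilar to a state of a finite labelled transition system. -/

import Mathlib

/-- Kinds of actions in a visibly pushdown automaton. -/
inductive ActKind : Type
  | call | ret | int

/-- Stack-height effect of an action kind. -/
def ActKind.h : ActKind → ℤ
  | .call => 1
  | .ret => -1
  | .int => 0

/-- The visibility condition: the length of the pushed string is determined by the
action kind (`2` for calls, `0` for returns, `1` for internals). -/
def VisiblyCondition {Q Γ A : Type*} (k : A → ActKind)
    (Δ : Set (Q × Γ × A × Q × List Γ)) : Prop :=
  ∀ r ∈ Δ, r.2.2.2.2.length = (match k r.2.2.1 with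
    | .call => 2 | .ret => 0 | .int => 1)

/-- One-step transition of the PDA on configurations (control state, stack). -/
def PDAStep {Q Γ A : Type*} (Δ : Set (Q × Γ × A × Q × List Γ)) :
    Q × List Γ → A → Q × List Γ → Prop :=
  fun c a c' => ∃ p X γ q α, (p, X, a, q, α) ∈ Δ ∧
    c = (p, X :: γ) ∧ c' = (q, α ++ γ)

/-- Multi-step transition relation along a word. -/
def WSteps {S A : Type*} (tr : S → A → S → Prop) : S → List A → S → Prop
  | s, [], t => s = t
  | s, a :: w, t => ∃ s', tr s a s' ∧ WSteps tr s' w t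

/-- Stack-height effect of a word. -/
def hw {A : Type*} (k : A → ActKind) (w : List A) : ℤ :=
  (w.map (fun a => (k a).h)).sum

/-- Reachability via any finite sequence of transitions. -/
def Reaches {S A : Type*} (tr : S → A → S → Prop) : S → S → Prop :=
  Relation.ReflTransGen (fun s s' => ∃ a, tr s a s')

def UnboundedPopping {Q Γ A : Type*} (k : A → ActKind)
    (Δ : Set (Q × Γ × A × Q × List Γ)) (c₀ : Q × List Γ) : Prop :=
  ∀ d : ℕ, ∃ (c : Q × List Γ) (w : List A),
    Reaches (PDAStep Δ) c₀ c ∧ (∃ c', WSteps (PDAStep Δ) c w c') ∧ hw k w ≤ -(d : ℤ)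

/-- A bisimulation between the states of two labelled transition systems. -/
def IsBisimulationBetween {S T A : Type*} (tr₁ : S → A → S → Prop)
    (tr₂ : T → A → T → Prop) (R : S → T → Prop) : Prop :=
  ∀ s t, R s t →
    (∀ a s', tr₁ s a s' → ∃ t', tr₂ t a t' ∧ R s' t') ∧
    (∀ a t', tr₂ t a t' → ∃ s', tr₁ s a s' ∧ R s' t')

/-!
Every rule reads only the top stack symbol, and by visibility the stack height changes along a
word `w` by exactly `hw k w`. Without unbounded popping there is a `d` such that no computation
from a reachable configuration lowers the stack by `d` or more, so once a stack is longer than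
`d`, everything below its top `d` symbols is never read again. Hence a reachable configuration
is bisimilar to the configuration obtained by keeping only the top `d` symbols and truncating
after each step; these truncated configurations form a finite system.
-/

section Bisimulation

variable {S T U A : Type*} {tr₁ : S → A → S → Prop} {tr₂ : T → A → T → Prop}
  {R : S → T → Prop}

theorem Reaches.exists_wSteps {tr : S → A → S → Prop} {s t : S} (h : Reaches tr s t) :
    ∃ w, WSteps tr s w t := by
  induction h using Relation.ReflTransGen.head_induction_on with
  | refl => exact ⟨[], rfl⟩
  | head hst _ ih =>
    obtain ⟨a, ha⟩ := hst
    obtain ⟨w, hws⟩ := ih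
    exact ⟨a :: w, _, ha, hws⟩

theorem IsBisimulationBetween.comap (h : IsBisimulationBetween tr₁ tr₂ R) (g : U → T)
    (hg : ∀ s t, R s t → t ∈ Set.range g) :
    IsBisimulationBetween tr₁ (fun u a u' => tr₂ (g u) a (g u')) (fun s u => R s (g u)) := by
  intro s u hsu
  refine ⟨fun a s' hs' => ?_, fun a u' hu' => (h s (g u) hsu).2 a (g u') hu'⟩
  obtain ⟨t', ht', hs't'⟩ := (h s (g u) hsu).1 a s' hs'
  obtain ⟨u', rfl⟩ := hg s' t' hs't'
  exact ⟨u', ht', hs't'⟩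

theorem IsBisimulationBetween.exists_finite_of_forall_mem (h : IsBisimulationBetween tr₁ tr₂ R)
    {B : Set T} (hB : B.Finite) (hRB : ∀ s t, R s t → t ∈ B) {s₀ : S} {t₀ : T}
    (h₀ : R s₀ t₀) :
    ∃ (F : Type) (_ : Finite F) (trF : F → A → F → Prop) (f : F) (R' : S → F → Prop),
      IsBisimulationBetween tr₁ trF R' ∧ R' s₀ f := by
  obtain ⟨n, g, hg⟩ := hB.fin_embedding
  obtain ⟨f, hf⟩ : t₀ ∈ Set.range g := hg ▸ hRB s₀ t₀ h₀
  exact ⟨Fin n, inferInstance, _, f, _, h.comap g fun s t hst => hg ▸ hRB s t hst, hf ▸ h₀⟩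

end Bisimulation

section PDA

variable {Q Γ A : Type*} {k : A → ActKind} {Δ : Set (Q × Γ × A × Q × List Γ)}

theorem hw_cons (a : A) (w : List A) : hw k (a :: w) = (k a).h + hw k w := by
  simp [hw]

theorem PDAStep.length_pos {c c' : Q × List Γ} {a : A} (h : PDAStep Δ c a c') :
    0 < c.2.length := by
  obtain ⟨p, X, γ, q, α, -, rfl, rfl⟩ := h
  simp

theorem PDAStep.length_eq (hvis : VisiblyCondition k Δ) {c c' : Q × List Γ} {a : A}
    (h : PDAStep Δ c a c') : (c'.2.length : ℤ) = c.2.length + (k a).h := by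
  obtain ⟨p, X, γ, q, α, hmem, rfl, rfl⟩ := h
  have hα := hvis _ hmem
  cases hk : k a <;> simp only [hk] at hα <;> simp [ActKind.h, hα] <;> ring

theorem WSteps.length_eq (hvis : VisiblyCondition k Δ) :
    ∀ {w : List A} {c c' : Q × List Γ}, WSteps (PDAStep Δ) c w c' →
      (c'.2.length : ℤ) = c.2.length + hw k w
  | [], _, _, rfl => by simp [hw]
  | _ :: _, _, _, ⟨_, h, hws⟩ => by
    rw [WSteps.length_eq hvis hws, h.length_eq hvis, hw_cons]
    ring

theorem PDAStep.append_stack {q q' : Q} {γ γ' : List Γ} {a : A}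
    (h : PDAStep Δ (q, γ) a (q', γ')) (σ : List Γ) :
    PDAStep Δ (q, γ ++ σ) a (q', γ' ++ σ) := by
  obtain ⟨p, X, γ₁, q₁, α, hmem, h₁, h₂⟩ := h
  simp only [Prod.mk.injEq] at h₁ h₂
  obtain ⟨rfl, rfl⟩ := h₁
  obtain ⟨rfl, rfl⟩ := h₂
  exact ⟨q, X, γ₁ ++ σ, q', α, hmem, by simp, by simp⟩

theorem PDAStep.of_append_stack {q : Q} {β σ : List Γ} (hβ : β ≠ []) {c' : Q × List Γ} {a : A}
    (h : PDAStep Δ (q, β ++ σ) a c') :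
    ∃ β', PDAStep Δ (q, β) a (c'.1, β') ∧ c'.2 = β' ++ σ := by
  obtain ⟨p, X, γ, q', α, hmem, h₁, rfl⟩ := h
  obtain ⟨Y, rest, rfl⟩ := List.exists_cons_of_ne_nil hβ
  simp only [List.cons_append, Prod.mk.injEq, List.cons.injEq] at h₁
  obtain ⟨rfl, rfl, rfl⟩ := h₁
  exact ⟨α ++ rest, ⟨q, Y, rest, q', α, hmem, rfl, rfl⟩, by simp⟩

variable (Δ) in
def HeightDropBounded (c₀ : Q × List Γ) (d : ℕ) : Prop :=
  ∀ c c', Reaches (PDAStep Δ) c₀ c → Reaches (PDAStep Δ) c c' →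
    (c.2.length : ℤ) < c'.2.length + d

theorem exists_heightDropBounded_of_not_unboundedPopping (hvis : VisiblyCondition k Δ)
    {c₀ : Q × List Γ} (hpop : ¬UnboundedPopping k Δ c₀) : ∃ d, HeightDropBounded Δ c₀ d := by
  simp only [UnboundedPopping, not_forall, not_exists, not_and, not_le] at hpop
  obtain ⟨d, hd⟩ := hpop
  refine ⟨d, fun c c' h₀ h => ?_⟩
  obtain ⟨w, hws⟩ := h.exists_wSteps
  have := hd c w h₀ ⟨c', hws⟩
  have := hws.length_eq hvis
  omega

variable (Δ) in
/-- When `σ` is a suffix of the stack of `c`, this says that no computation from `c` ever reads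
a symbol of `σ`. -/
def StackBottomUnread (σ : List Γ) (c : Q × List Γ) : Prop :=
  ∀ c₁ c₂ a, Reaches (PDAStep Δ) c c₁ → PDAStep Δ c₁ a c₂ → σ.length < c₁.2.length

theorem stackBottomUnread_nil (c : Q × List Γ) : StackBottomUnread Δ [] c :=
  fun _ _ _ _ h => h.length_pos

theorem StackBottomUnread.of_step {σ : List Γ} {c c' : Q × List Γ} {a : A}
    (hσ : StackBottomUnread Δ σ c) (h : PDAStep Δ c a c') : StackBottomUnread Δ σ c' :=
  fun c₁ c₂ b h₁ h₂ => hσ c₁ c₂ b (.head ⟨a, h⟩ h₁) h₂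

variable (Δ) in
def TruncStep (d : ℕ) (f : Q × List Γ) (a : A) (f' : Q × List Γ) : Prop :=
  ∃ c', PDAStep Δ f a c' ∧ f' = (c'.1, c'.2.take d)

variable (Δ) in
def TruncatedRel (c₀ : Q × List Γ) (d : ℕ) (c f : Q × List Γ) : Prop :=
  Reaches (PDAStep Δ) c₀ c ∧ f.2.length ≤ d ∧
    ∃ σ, c = (f.1, f.2 ++ σ) ∧ StackBottomUnread Δ σ c

variable {c₀ : Q × List Γ} {d : ℕ}

theorem truncatedRel_take (hbound : HeightDropBounded Δ c₀ d) {q : Q} {γ σ : List Γ}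
    (hreach : Reaches (PDAStep Δ) c₀ (q, γ ++ σ)) (hσ : StackBottomUnread Δ σ (q, γ ++ σ)) :
    TruncatedRel Δ c₀ d (q, γ ++ σ) (q, γ.take d) := by
  refine ⟨hreach, List.length_take_le _ _, γ.drop d ++ σ,
    by rw [← List.append_assoc, List.take_append_drop], ?_⟩
  rcases le_or_gt γ.length d with hγ | hγ
  · rwa [List.drop_eq_nil_of_le hγ, List.nil_append]
  · intro c₁ _ _ h₁ _
    have := hbound _ c₁ hreach h₁
    simp only [List.length_append, List.length_drop] at this ⊢
    omega

theorem truncatedRel_step (hbound : HeightDropBounded Δ c₀ d) {q q' : Q} {β β' σ : List Γ}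
    {a : A}
    (hreach : Reaches (PDAStep Δ) c₀ (q, β ++ σ)) (hσ : StackBottomUnread Δ σ (q, β ++ σ))
    (h : PDAStep Δ (q, β) a (q', β')) :
    TruncatedRel Δ c₀ d (q', β' ++ σ) (q', β'.take d) :=
  have h' := h.append_stack σ
  truncatedRel_take hbound (hreach.tail ⟨a, h'⟩) (hσ.of_step h')

theorem isBisimulationBetween_truncStep (hbound : HeightDropBounded Δ c₀ d) :
    IsBisimulationBetween (PDAStep Δ) (TruncStep Δ d) (TruncatedRel Δ c₀ d) := by
  rintro c ⟨q, β⟩ ⟨hreach, -, σ, rfl, hσ⟩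
  constructor
  · intro a c' h
    have hβ : β ≠ [] := by
      rintro rfl
      simpa using hσ _ _ _ .refl h
    obtain ⟨β', hβ', hc'⟩ := h.of_append_stack hβ
    obtain ⟨q', γ'⟩ := c'
    subst hc'
    exact ⟨_, ⟨_, hβ', rfl⟩, truncatedRel_step hbound hreach hσ hβ'⟩
  · rintro a f' ⟨⟨q', β'⟩, h, rfl⟩
    exact ⟨_, h.append_stack σ, truncatedRel_step hbound hreach hσ h⟩

end PDA

theorem no_unbounded_popping_bisimilar_to_finite_general
    {Q Γ A : Type*} [Finite Q] [Finite Γ] (k : A → ActKind)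
    (Δ : Set (Q × Γ × A × Q × List Γ)) (hvis : VisiblyCondition k Δ)
    (p : Q) (X : Γ) (hpop : ¬ UnboundedPopping k Δ (p, [X])) :
    ∃ (F : Type) (_ : Finite F) (trF : F → A → F → Prop) (f : F)
      (R : Q × List Γ → F → Prop),
      IsBisimulationBetween (PDAStep Δ) trF R ∧ R (p, [X]) f := by
  obtain ⟨d, hd⟩ := exists_heightDropBounded_of_not_unboundedPopping hvis hpop
  have hfin : {f : Q × List Γ | f.2.length ≤ d}.Finite :=
    (Set.finite_univ.prod (List.finite_length_le Γ d)).subset fun _ hf => ⟨trivial, hf⟩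
  exact (isBisimulationBetween_truncStep hd).exists_finite_of_forall_mem hfin
    (fun _ _ h => h.2.1) (truncatedRel_take (γ := [X]) hd .refl (stackBottomUnread_nil _))

theorem no_unbounded_popping_bisimilar_to_finite
    {Q Γ A : Type*} [Finite Q] [Finite Γ] [Finite A] (k : A → ActKind)
    (Δ : Set (Q × Γ × A × Q × List Γ)) (hvis : VisiblyCondition k Δ)
    (p : Q) (X : Γ) (hpop : ¬ UnboundedPopping k Δ (p, [X])) :
    ∃ (F : Type) (_ : Finite F) (trF : F → A → F → Prop) (f : F)
      (R : Q × List Γ → F → Prop),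
      IsBisimulationBetween (PDAStep Δ) trF R ∧ R (p, [X]) f :=
  no_unbounded_popping_bisimilar_to_finite_general k Δ hvis p X hpop
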